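/- arXiv:1002.2060 — 2 statements merged into one kernel-verified Lean document; each statement's English description precedes it below -/
import Mathlib

section
/- Let α, β ≥ 0 be real numbers and l1, l2 nonnegative integers with m = l1+l2 ≥ 1. For every real polynomial Q in two variables whose coefficient of t1^{l1} t2^{l2} equals 1 and all of whose other monomials have total degree at most m−1, one has sup_{(t1,t2) ∈ Δ} t1^α t2^β |Q(t1,t2)| ≥ E_m(α,β); consequently D_{l1,l2}(α,β) ≥ E_m(α,β). (Proof idea: restrict Q to the segment t1 = t, t2 = 1−t, on which t ↦ (−1)^{l2} Q(t,1−t) is a monic polynomial of degree m.) -/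
/-- The weighted sup norm `sup_{t ∈ [0,1]} t^α (1-t)^β |p(t)|` (real `rpow`, so `0^0 = 1`). -/
noncomputable def intervalSup (a b : ℝ) (p : Polynomial ℝ) : ℝ :=
  sSup ((fun t : ℝ => t ^ a * (1 - t) ^ b * |p.eval t|) '' Set.Icc (0 : ℝ) 1)

/-- The 1-D weighted Chebyshev constant `E_m(α,β)`: infimum over monic real polynomials of
degree `m` of `sup_{t ∈ [0,1]} t^α (1-t)^β |p(t)|`. -/
noncomputable def devE (m : ℕ) (a b : ℝ) : ℝ :=
  sInf {r : ℝ | ∃ p : Polynomial ℝ, p.Monic ∧ p.natDegree = m ∧ r = intervalSup a b p}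
/-- The standard triangle `Δ = {(t₁,t₂) : t₁ ≥ 0, t₂ ≥ 0, t₁ + t₂ ≤ 1}`. -/
def triangle : Set (ℝ × ℝ) := {t : ℝ × ℝ | 0 ≤ t.1 ∧ 0 ≤ t.2 ∧ t.1 + t.2 ≤ 1}

/-- The weighted sup norm on the triangle: `sup_{(t₁,t₂) ∈ Δ} t₁^α t₂^β |Q(t₁,t₂)|`
(real `rpow`, so `0^0 = 1`). -/
noncomputable def triangleSup (a b : ℝ) (Q : MvPolynomial (Fin 2) ℝ) : ℝ :=
  sSup ((fun t : ℝ × ℝ => t.1 ^ a * t.2 ^ b * |MvPolynomial.eval ![t.1, t.2] Q|) '' triangle)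

/-- `Q` has coefficient `1` on the monomial `t₁^{l₁} t₂^{l₂}` and all its other monomials have
total degree at most `l₁ + l₂ - 1`. -/
def IsDevDCandidate (l1 l2 : ℕ) (Q : MvPolynomial (Fin 2) ℝ) : Prop :=
  Q.coeff (Finsupp.single (0 : Fin 2) l1 + Finsupp.single (1 : Fin 2) l2) = 1 ∧
  ∀ d ∈ Q.support, d ≠ Finsupp.single (0 : Fin 2) l1 + Finsupp.single (1 : Fin 2) l2 →
    (d.sum fun _ e => e) ≤ l1 + l2 - 1

/-- `D_{l₁,l₂}(α,β)`: infimum over such `Q` of the weighted sup norm on the triangle. -/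
noncomputable def devD (l1 l2 : ℕ) (a b : ℝ) : ℝ :=
  sInf {r : ℝ | ∃ Q : MvPolynomial (Fin 2) ℝ, IsDevDCandidate l1 l2 Q ∧ r = triangleSup a b Q}

open Polynomial in
lemma eval_aeval' (t : ℝ) (Q : MvPolynomial (Fin 2) ℝ) :
    Polynomial.eval t (MvPolynomial.aeval ![Polynomial.X, 1 - Polynomial.X] Q) =
      MvPolynomial.eval ![t, 1 - t] Q := by
  rw [MvPolynomial.aeval_def, ← Polynomial.coe_evalRingHom,
    MvPolynomial.eval₂_comp_left (Polynomial.evalRingHom t)]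
  rw [MvPolynomial.eval]
  congr 1
  · ext r; simp
  · funext i; fin_cases i <;> simp

lemma d_sum_eq (d : Fin 2 →₀ ℕ) : (d.sum fun _ e => e) = d 0 + d 1 := by
  rw [Finsupp.sum_fintype _ _ (fun _ => rfl), Fin.sum_univ_two]

lemma special_apply (l1 l2 : ℕ) :
    (Finsupp.single (0 : Fin 2) l1 + Finsupp.single (1 : Fin 2) l2) 0 = l1 ∧
    (Finsupp.single (0 : Fin 2) l1 + Finsupp.single (1 : Fin 2) l2) 1 = l2 := by
  constructor <;> simp [Finsupp.single_apply]

open Polynomial in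
lemma one_sub_X_natDegree : (1 - Polynomial.X : ℝ[X]).natDegree = 1 := by
  rw [show (1 - Polynomial.X : ℝ[X]) = -(Polynomial.X - Polynomial.C 1) by
    rw [Polynomial.C_1]; ring]
  rw [Polynomial.natDegree_neg, Polynomial.natDegree_X_sub_C]

open Polynomial in
lemma one_sub_X_pow_coeff (n : ℕ) : ((1 - Polynomial.X : ℝ[X]) ^ n).coeff n = (-1) ^ n := by
  have h : ((1 : ℝ[X]) - Polynomial.X) ^ n
      = Polynomial.C ((-1:ℝ) ^ n) * (Polynomial.X - Polynomial.C 1) ^ n := by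
    rw [map_pow, ← mul_pow]
    congr 1
    rw [Polynomial.C_neg, Polynomial.C_1]; ring
  rw [h, Polynomial.coeff_C_mul]
  have hm : ((Polynomial.X - Polynomial.C (1:ℝ)) ^ n).Monic := (Polynomial.monic_X_sub_C 1).pow n
  have hd : ((Polynomial.X - Polynomial.C (1:ℝ)) ^ n).natDegree = n := by
    rw [Polynomial.natDegree_pow, Polynomial.natDegree_X_sub_C, mul_one]
  have h1 := hm.coeff_natDegree
  rw [hd] at h1
  rw [h1, mul_one]

open Polynomial in
lemma exists_monic_aux (l1 l2 : ℕ) (hm : 1 ≤ l1 + l2) (Q : MvPolynomial (Fin 2) ℝ)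
    (hQ : IsDevDCandidate l1 l2 Q) :
    ∃ p : ℝ[X], p.Monic ∧ p.natDegree = l1 + l2 ∧
      ∀ t : ℝ, |p.eval t| = |MvPolynomial.eval ![t, 1 - t] Q| := by
  set m := l1 + l2 with hmdef
  set sp := Finsupp.single (0 : Fin 2) l1 + Finsupp.single (1 : Fin 2) l2 with hsp
  set q : ℝ[X] := MvPolynomial.aeval ![Polynomial.X, 1 - Polynomial.X] Q with hqdef
  have hq : q = ∑ d ∈ Q.support,
      Polynomial.C (Q.coeff d) * (Polynomial.X ^ (d 0) * (1 - Polynomial.X) ^ (d 1)) := by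
    conv_lhs => rw [hqdef, Q.as_sum, map_sum]
    refine Finset.sum_congr rfl fun d _ => ?_
    rw [MvPolynomial.aeval_monomial,
      Finsupp.prod_fintype _ _ (fun i => pow_zero _), Fin.prod_univ_two]
    simp [Polynomial.algebraMap_eq]
  have hterm_deg : ∀ d : Fin 2 →₀ ℕ,
      (Polynomial.C (Q.coeff d) * (Polynomial.X ^ (d 0) * (1 - Polynomial.X) ^ (d 1))).natDegree
        ≤ d 0 + d 1 := by
    intro d
    refine (Polynomial.natDegree_C_mul_le _ _).trans ?_
    refine (Polynomial.natDegree_mul_le).trans ?_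
    gcongr
    · exact (Polynomial.natDegree_X_pow _).le
    · exact (Polynomial.natDegree_pow_le).trans (by rw [one_sub_X_natDegree, mul_one])
  have hqdeg : q.natDegree ≤ m := by
    rw [hq]
    refine (Polynomial.natDegree_sum_le _ _).trans ?_
    rw [Finset.fold_max_le]
    refine ⟨Nat.zero_le _, fun d hd => (hterm_deg d).trans ?_⟩
    rw [← d_sum_eq]
    by_cases h : d = sp
    · rw [h, hsp, d_sum_eq, (special_apply l1 l2).1, (special_apply l1 l2).2]
    · exact (hQ.2 d hd h).trans (Nat.sub_le _ _)
  have hspmem : sp ∈ Q.support :=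
    MvPolynomial.mem_support_iff.2 (by rw [hsp, hQ.1]; norm_num)
  have hqcoeff : q.coeff m = (-1) ^ l2 := by
    rw [hq, Polynomial.finset_sum_coeff]
    rw [Finset.sum_eq_single_of_mem sp hspmem]
    · rw [hsp, hQ.1, (special_apply l1 l2).1, (special_apply l1 l2).2]
      rw [map_one, one_mul, hmdef, add_comm l1 l2, Polynomial.coeff_X_pow_mul]
      exact one_sub_X_pow_coeff l2
    · intro d hd hne
      apply Polynomial.coeff_eq_zero_of_natDegree_lt
      refine lt_of_le_of_lt (hterm_deg d) ?_
      have := hQ.2 d hd hne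
      rw [d_sum_eq] at this
      omega
  refine ⟨Polynomial.C ((-1:ℝ) ^ l2) * q, ?_, ?_, ?_⟩
  case refine_3 =>
    intro t
    rw [Polynomial.eval_mul, Polynomial.eval_C, abs_mul, abs_pow, abs_neg, abs_one, one_pow,
      one_mul, hqdef, eval_aeval']
  all_goals {
    have hc : (Polynomial.C ((-1:ℝ) ^ l2) * q).coeff m = 1 := by
      rw [Polynomial.coeff_C_mul, hqcoeff, ← pow_add, Even.neg_one_pow ⟨l2, rfl⟩]
    have hd2 : (Polynomial.C ((-1:ℝ) ^ l2) * q).natDegree = m :=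
      Polynomial.natDegree_eq_of_le_of_coeff_ne_zero
        ((Polynomial.natDegree_C_mul_le _ _).trans hqdeg) (by rw [hc]; norm_num)
    first
    | exact hd2
    | { unfold Polynomial.Monic Polynomial.leadingCoeff; rw [hd2]; exact hc }
  }

open Polynomial in
lemma intervalSup_le_triangleSup (a b : ℝ) (ha : 0 ≤ a) (hb : 0 ≤ b)
    (Q : MvPolynomial (Fin 2) ℝ) (p : ℝ[X])
    (hp : ∀ t : ℝ, |p.eval t| = |MvPolynomial.eval ![t, 1 - t] Q|) :
    intervalSup a b p ≤ triangleSup a b Q := by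
  have hclosed : IsClosed triangle := by
    have h : triangle = {t : ℝ × ℝ | 0 ≤ t.1} ∩ ({t | 0 ≤ t.2} ∩ {t | t.1 + t.2 ≤ 1}) := rfl
    rw [h]
    exact (isClosed_le continuous_const continuous_fst).inter
      ((isClosed_le continuous_const continuous_snd).inter
        (isClosed_le (continuous_fst.add continuous_snd) continuous_const))
  have hsub : triangle ⊆ Set.Icc ((0:ℝ), (0:ℝ)) (1, 1) := by
    rintro t ⟨h1, h2, h3⟩
    simp only [Set.mem_Icc, Prod.le_def]
    refine ⟨⟨h1, h2⟩, by linarith, by linarith⟩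
  have hcomp : IsCompact triangle := IsCompact.of_isClosed_subset isCompact_Icc hclosed hsub
  have hcont : Continuous fun t : ℝ × ℝ => |MvPolynomial.eval ![t.1, t.2] Q| := by
    refine Continuous.abs ((MvPolynomial.continuous_eval Q).comp ?_)
    refine continuous_pi fun i => ?_
    fin_cases i
    · exact continuous_fst
    · exact continuous_snd
  obtain ⟨x, hx, hM⟩ := hcomp.exists_isMaxOn ⟨(0, 0), by constructor <;> norm_num⟩
    hcont.continuousOn
  set M := |MvPolynomial.eval ![x.1, x.2] Q| with hMdef
  have hbdd : BddAbove ((fun t : ℝ × ℝ => t.1 ^ a * t.2 ^ b *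
      |MvPolynomial.eval ![t.1, t.2] Q|) '' triangle) := by
    refine ⟨M, ?_⟩
    rintro z ⟨t, ht, rfl⟩
    obtain ⟨h1, h2, h3⟩ := ht
    have hw : t.1 ^ a * t.2 ^ b ≤ 1 :=
      mul_le_one₀ (Real.rpow_le_one h1 (by linarith) ha) (Real.rpow_nonneg h2 b)
        (Real.rpow_le_one h2 (by linarith) hb)
    calc t.1 ^ a * t.2 ^ b * |MvPolynomial.eval ![t.1, t.2] Q|
        ≤ 1 * |MvPolynomial.eval ![t.1, t.2] Q| := by
          apply mul_le_mul_of_nonneg_right hw (abs_nonneg _)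
      _ = |MvPolynomial.eval ![t.1, t.2] Q| := one_mul _
      _ ≤ M := hM ⟨h1, h2, h3⟩
  refine csSup_le_csSup hbdd ⟨_, ⟨0, by norm_num, rfl⟩⟩ ?_
  rintro z ⟨t, ht, rfl⟩
  exact ⟨(t, 1 - t), ⟨ht.1, by simp [ht.2], by simp⟩, by simp [hp t]⟩

/-- for `m = l₁+l₂ ≥ 1`, every admissible `Q` has weighted deviation on `Δ` at
least `E_m(α,β)`; consequently `D_{l₁,l₂}(α,β) ≥ E_m(α,β)`. -/
theorem triangle_deviation_ge (a b : ℝ) (ha : 0 ≤ a) (hb : 0 ≤ b) (l1 l2 : ℕ)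
    (hm : 1 ≤ l1 + l2) :
    (∀ Q : MvPolynomial (Fin 2) ℝ, IsDevDCandidate l1 l2 Q →
      devE (l1 + l2) a b ≤ triangleSup a b Q) ∧
    devE (l1 + l2) a b ≤ devD l1 l2 a b := by
  have part1 : ∀ Q : MvPolynomial (Fin 2) ℝ, IsDevDCandidate l1 l2 Q →
      devE (l1 + l2) a b ≤ triangleSup a b Q := by
    intro Q hQ
    obtain ⟨p, hmonic, hdeg, hp⟩ := exists_monic_aux l1 l2 hm Q hQ
    refine le_trans (csInf_le ?_ ⟨p, hmonic, hdeg, rfl⟩)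
      (intervalSup_le_triangleSup a b ha hb Q p hp)
    refine ⟨0, ?_⟩
    rintro r ⟨p', _, _, rfl⟩
    apply Real.sSup_nonneg
    rintro x ⟨t, ht, rfl⟩
    exact mul_nonneg (mul_nonneg (Real.rpow_nonneg ht.1 a)
      (Real.rpow_nonneg (by linarith [ht.2] : (0:ℝ) ≤ 1 - t) b)) (abs_nonneg _)
  refine ⟨part1, ?_⟩
  have hcand : IsDevDCandidate l1 l2 (MvPolynomial.monomial
      (Finsupp.single (0 : Fin 2) l1 + Finsupp.single (1 : Fin 2) l2) (1:ℝ)) := by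
    constructor
    · simp [MvPolynomial.coeff_monomial]
    · intro d hd hne
      rw [MvPolynomial.support_monomial, if_neg one_ne_zero, Finset.mem_singleton] at hd
      exact absurd hd hne
  refine le_csInf ⟨_, _, hcand, rfl⟩ ?_
  rintro r ⟨Q, hQ, rfl⟩
  exact part1 Q hQ
end

section
/- Let α, β ≥ 0 be real numbers and n ≥ 1 an integer. There exists a monic real polynomial p of degree n with sup_{t ∈ [0,1]} t^α (1−t)^β |p(t)| = E_n(α,β) whose roots are n distinct real numbers ξ_1 < ξ_2 < ... < ξ_n, all lying in the open interval (0,1), so that p(t) = (t−ξ_1)(t−ξ_2)⋯(t−ξ_n). -/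
/-!
Root tuples `ξ ∈ [0,1]ⁿ` form a compact set on which `ξ ↦ sup t^α (1-t)^β |∏ (t - ξᵢ)|` is lower
semicontinuous, so it has a minimizer; this minimizer is extremal for `E_n(α,β)` because clamping
the real parts of the complex roots of any monic `p` into `[0,1]` decreases `|p|` pointwise on
`[0,1]`. The extremal value `E` is positive.

If an extremal `g * Q` has a root `ξ ∉ (0,1)` (`g = t - ξ`) or a double root `c` (`g = (t - c)²`),
replace `g` by `h = t - s` with `s` just inside `(0,1)`, resp. by `h = (t - c + ε)(t - c - ε)`.
Then `|h| ≤ max |g| ε`, resp. `max |g| ε²`, on `[0,1]`, so the weighted sup of `h * Q` is at most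
`max E (ε · sup Q) = E` for small `ε`, and `h * Q` is extremal again. Choosing the new roots away
from the old ones, each move increases the number of simple roots in `(0,1)`, so the process ends.
-/

open Polynomial Set Function

section IntervalSup

variable {a b : ℝ}

lemma weight_nonneg {t : ℝ} (ht : t ∈ Icc (0 : ℝ) 1) : 0 ≤ t ^ a * (1 - t) ^ b :=
  mul_nonneg (Real.rpow_nonneg ht.1 a) (Real.rpow_nonneg (sub_nonneg.2 ht.2) b)

lemma continuous_weight_mul_abs_eval (ha : 0 ≤ a) (hb : 0 ≤ b) (p : ℝ[X]) :
    Continuous fun t : ℝ => t ^ a * (1 - t) ^ b * |p.eval t| :=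
  ((Real.continuous_rpow_const ha).mul
    ((Real.continuous_rpow_const hb).comp (continuous_sub_left 1))).mul p.continuous.abs

lemma le_intervalSup (ha : 0 ≤ a) (hb : 0 ≤ b) (p : ℝ[X]) {t : ℝ} (ht : t ∈ Icc (0 : ℝ) 1) :
    t ^ a * (1 - t) ^ b * |p.eval t| ≤ intervalSup a b p :=
  le_csSup (isCompact_Icc.bddAbove_image (continuous_weight_mul_abs_eval ha hb p).continuousOn)
    (mem_image_of_mem _ ht)

lemma intervalSup_le {p : ℝ[X]} {c : ℝ}
    (h : ∀ t ∈ Icc (0 : ℝ) 1, t ^ a * (1 - t) ^ b * |p.eval t| ≤ c) : intervalSup a b p ≤ c :=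
  csSup_le ((nonempty_Icc.2 zero_le_one).image _) (forall_mem_image.2 h)

lemma intervalSup_nonneg (ha : 0 ≤ a) (hb : 0 ≤ b) (p : ℝ[X]) : 0 ≤ intervalSup a b p :=
  (mul_nonneg (weight_nonneg (left_mem_Icc.2 zero_le_one)) (abs_nonneg _)).trans
    (le_intervalSup ha hb p (left_mem_Icc.2 zero_le_one))

lemma intervalSup_pos (ha : 0 ≤ a) (hb : 0 ≤ b) {p : ℝ[X]} (hp : p ≠ 0) :
    0 < intervalSup a b p := by
  obtain ⟨t, ⟨ht0, ht1⟩, hroot⟩ :=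
    ((Ioo_infinite zero_lt_one).sdiff (finite_setOfPred_isRoot hp)).nonempty
  refine lt_of_lt_of_le ?_ (le_intervalSup ha hb p ⟨ht0.le, ht1.le⟩)
  exact mul_pos (mul_pos (Real.rpow_pos_of_pos ht0 a) (Real.rpow_pos_of_pos (sub_pos.2 ht1) b))
    (abs_pos.2 hroot)

lemma intervalSup_mono (ha : 0 ≤ a) (hb : 0 ≤ b) {p q : ℝ[X]}
    (h : ∀ t ∈ Icc (0 : ℝ) 1, |q.eval t| ≤ |p.eval t|) : intervalSup a b q ≤ intervalSup a b p :=
  intervalSup_le fun t ht =>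
    (mul_le_mul_of_nonneg_left (h t ht) (weight_nonneg ht)).trans (le_intervalSup ha hb p ht)

lemma intervalSup_mul_le_max (ha : 0 ≤ a) (hb : 0 ≤ b) {g h Q : ℝ[X]} {ε : ℝ} (hε : 0 ≤ ε)
    (hgh : ∀ t ∈ Icc (0 : ℝ) 1, |h.eval t| ≤ max |g.eval t| ε) :
    intervalSup a b (h * Q) ≤ max (intervalSup a b (g * Q)) (ε * intervalSup a b Q) := by
  refine intervalSup_le fun t ht => ?_
  have hwQ : 0 ≤ t ^ a * (1 - t) ^ b * |Q.eval t| := mul_nonneg (weight_nonneg ht) (abs_nonneg _)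
  calc t ^ a * (1 - t) ^ b * |(h * Q).eval t|
      = t ^ a * (1 - t) ^ b * |Q.eval t| * |h.eval t| := by rw [eval_mul, abs_mul]; ring
    _ ≤ t ^ a * (1 - t) ^ b * |Q.eval t| * max |g.eval t| ε :=
        mul_le_mul_of_nonneg_left (hgh t ht) hwQ
    _ = max (t ^ a * (1 - t) ^ b * |(g * Q).eval t|) (ε * (t ^ a * (1 - t) ^ b * |Q.eval t|)) := by
        rw [mul_max_of_nonneg _ _ hwQ, eval_mul, abs_mul]; congr 1 <;> ring
    _ ≤ _ := max_le_max (le_intervalSup ha hb _ ht)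
        (mul_le_mul_of_nonneg_left (le_intervalSup ha hb Q ht) hε)

end IntervalSup

section Extremal

variable {a b : ℝ} {n : ℕ}

lemma devE_le_intervalSup (ha : 0 ≤ a) (hb : 0 ≤ b) {p : ℝ[X]} (hp : p.Monic)
    (hd : p.natDegree = n) : devE n a b ≤ intervalSup a b p :=
  csInf_le ⟨0, by rintro _ ⟨q, -, -, rfl⟩; exact intervalSup_nonneg ha hb q⟩ ⟨p, hp, hd, rfl⟩

lemma intervalSup_mul_eq_devE (ha : 0 ≤ a) (hb : 0 ≤ b) {g h Q : ℝ[X]} {ε : ℝ}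
    (hmonic : (h * Q).Monic) (hdeg : (h * Q).natDegree = n)
    (hgQ : intervalSup a b (g * Q) = devE n a b) (hε : 0 ≤ ε)
    (hεQ : ε * intervalSup a b Q ≤ devE n a b)
    (hgh : ∀ t ∈ Icc (0 : ℝ) 1, |h.eval t| ≤ max |g.eval t| ε) :
    intervalSup a b (h * Q) = devE n a b :=
  le_antisymm ((intervalSup_mul_le_max ha hb hε hgh).trans (max_le hgQ.le hεQ))
    (devE_le_intervalSup ha hb hmonic hdeg)

end Extremal

noncomputable def rootPoly {n : ℕ} (ξ : Fin n → ℝ) : ℝ[X] := ∏ i, (X - C (ξ i))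

section RootPoly

variable {n : ℕ}

lemma rootPoly_monic (ξ : Fin n → ℝ) : (rootPoly ξ).Monic :=
  monic_prod_of_monic _ _ fun i _ => monic_X_sub_C (ξ i)

lemma natDegree_rootPoly (ξ : Fin n → ℝ) : (rootPoly ξ).natDegree = n := by
  simp [rootPoly, natDegree_prod _ _ fun i _ => X_sub_C_ne_zero (ξ i)]

lemma eval_rootPoly (ξ : Fin n → ℝ) (t : ℝ) : (rootPoly ξ).eval t = ∏ i, (t - ξ i) := by
  simp [rootPoly, eval_prod]

lemma rootPoly_comp_equiv (ξ : Fin n → ℝ) (σ : Equiv.Perm (Fin n)) :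
    rootPoly (ξ ∘ σ) = rootPoly ξ :=
  Equiv.prod_comp σ fun i => X - C (ξ i)

lemma rootPoly_update (ξ : Fin n → ℝ) (i : Fin n) (s : ℝ) :
    rootPoly (update ξ i s) = (X - C s) * ∏ k ∈ Finset.univ.erase i, (X - C (ξ k)) := by
  rw [rootPoly, ← Finset.mul_prod_erase _ _ (Finset.mem_univ i), update_self]
  exact congrArg _ <| Finset.prod_congr rfl fun k hk => by
    rw [update_of_ne (Finset.ne_of_mem_erase hk)]

lemma rootPoly_update_update (ξ : Fin n → ℝ) {i j : Fin n} (hij : i ≠ j) (s r : ℝ) :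
    rootPoly (update (update ξ i s) j r) =
      (X - C s) * (X - C r) * ∏ k ∈ (Finset.univ.erase j).erase i, (X - C (ξ k)) := by
  rw [rootPoly_update, ← Finset.mul_prod_erase _ _ (Finset.mem_erase.2 ⟨hij, Finset.mem_univ i⟩),
    update_self, Finset.prod_congr rfl fun k hk => by
      rw [update_of_ne (Finset.ne_of_mem_erase hk)]]
  ring

end RootPoly

lemma Multiset.exists_univ_map_eq {α : Type*} {n : ℕ} (s : Multiset α) (hs : s.card = n) :
    ∃ f : Fin n → α, Finset.univ.val.map f = s := by
  obtain ⟨L, rfl⟩ : ∃ L : List α, (L : Multiset α) = s := ⟨s.toList, s.coe_toList⟩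
  rw [Multiset.coe_card] at hs
  subst hs
  exact ⟨L.get, by rw [Fin.univ_val_map, List.ofFn_get]⟩

lemma Polynomial.Splits.exists_eq_prod_X_sub_C {R : Type*} [CommRing R] [IsDomain R] {p : R[X]}
    {n : ℕ} (hs : p.Splits) (hp : p.Monic) (hn : p.natDegree = n) :
    ∃ ζ : Fin n → R, p = ∏ i, (X - C (ζ i)) := by
  obtain ⟨ζ, hζ⟩ := p.roots.exists_univ_map_eq ((splits_iff_card_roots.1 hs).trans hn)
  refine ⟨ζ, ?_⟩
  rw [Finset.prod_eq_multiset_prod, hs.eq_prod_roots_of_monic hp, ← hζ, Multiset.map_map]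
  rfl

section Existence

variable {a b : ℝ} {n : ℕ}

lemma exists_rootPoly_abs_eval_le {p : ℝ[X]} (hp : p.Monic) (hn : p.natDegree = n) :
    ∃ ξ : Fin n → ℝ, (∀ i, ξ i ∈ Icc (0 : ℝ) 1) ∧
      ∀ t ∈ Icc (0 : ℝ) 1, |(rootPoly ξ).eval t| ≤ |p.eval t| := by
  obtain ⟨ζ, hζ⟩ := (IsAlgClosed.splits (p.map (algebraMap ℝ ℂ))).exists_eq_prod_X_sub_C
    (hp.map _) ((natDegree_map _).trans hn)
  refine ⟨fun i => projIcc 0 1 zero_le_one (ζ i).re, fun i => Subtype.prop _, fun t ht => ?_⟩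
  have hnorm : |p.eval t| = ∏ i, ‖(t : ℂ) - ζ i‖ := by
    have h := congrArg (fun q => ‖q.eval (algebraMap ℝ ℂ t)‖) hζ
    simp only [eval_map_algebraMap, aeval_algebraMap_apply_eq_algebraMap_eval, eval_prod, eval_sub,
      eval_X, eval_C, norm_prod] at h
    simpa using h
  rw [eval_rootPoly, Finset.abs_prod, hnorm]
  refine Finset.prod_le_prod (fun _ _ => abs_nonneg _) fun i _ => ?_
  calc |t - projIcc 0 1 zero_le_one (ζ i).re|
      = |(projIcc 0 1 zero_le_one t : ℝ) - projIcc 0 1 zero_le_one (ζ i).re| := by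
        rw [projIcc_of_mem _ ht]
    _ ≤ |t - (ζ i).re| := abs_projIcc_sub_projIcc _
    _ ≤ ‖(t : ℂ) - ζ i‖ := by simpa using Complex.abs_re_le_norm ((t : ℂ) - ζ i)

lemma lowerSemicontinuous_intervalSup_rootPoly (ha : 0 ≤ a) (hb : 0 ≤ b) :
    LowerSemicontinuous fun ξ : Fin n → ℝ => intervalSup a b (rootPoly ξ) := by
  simp only [intervalSup, sSup_image']
  refine lowerSemicontinuous_ciSup (fun ξ => ?_) fun t => Continuous.lowerSemicontinuous ?_
  · exact (isCompact_Icc.bddAbove_image (continuous_weight_mul_abs_eval ha hb _).continuousOn).mono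
      (range_subset_iff.2 fun t => mem_image_of_mem _ t.2)
  · simp only [eval_rootPoly]
    exact continuous_const.mul
      (continuous_finsetProd _ fun i _ => continuous_const.sub (continuous_apply i)).abs

lemma exists_intervalSup_rootPoly_eq_devE (ha : 0 ≤ a) (hb : 0 ≤ b) (n : ℕ) :
    ∃ ξ : Fin n → ℝ, intervalSup a b (rootPoly ξ) = devE n a b := by
  obtain ⟨ξ, -, hmin⟩ := (lowerSemicontinuous_intervalSup_rootPoly ha hb).lowerSemicontinuousOn
    (Icc 0 1) |>.exists_isMinOn (nonempty_Icc.2 zero_le_one) isCompact_Icc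
  refine ⟨ξ, le_antisymm (le_csInf ⟨_, rootPoly ξ, rootPoly_monic ξ, natDegree_rootPoly ξ, rfl⟩ ?_)
    (devE_le_intervalSup ha hb (rootPoly_monic ξ) (natDegree_rootPoly ξ))⟩
  rintro _ ⟨p, hp, hn, rfl⟩
  obtain ⟨ζ, hζ, hle⟩ := exists_rootPoly_abs_eval_le hp hn
  exact (isMinOn_iff.1 hmin ζ ⟨fun i => (hζ i).1, fun i => (hζ i).2⟩).trans
    (intervalSup_mono ha hb hle)

end Existence

lemma abs_sub_le_max_of_nonneg {α : Type*} [AddCommGroup α] [LinearOrder α] [IsOrderedAddMonoid α]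
    {x y : α} (hx : 0 ≤ x) (hy : 0 ≤ y) : |x - y| ≤ max x y :=
  abs_sub_le_iff.2 ⟨(sub_le_self x hy).trans (le_max_left x y),
    (sub_le_self y hx).trans (le_max_right x y)⟩

lemma exists_mem_Ioo_notMem_mul_le {δ E M : ℝ} (hδ : 0 < δ) (hE : 0 < E) (hM : 0 ≤ M)
    {S : Set ℝ} (hS : S.Finite) : ∃ ε ∈ Ioo 0 δ, ε ∉ S ∧ ε * M ≤ E := by
  have hδ' : 0 < min δ (E / (M + 1)) := lt_min hδ (div_pos hE (by linarith))
  obtain ⟨ε, ⟨hε0, hεδ⟩, hεS⟩ := ((Ioo_infinite hδ').sdiff hS).nonempty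
  refine ⟨ε, ⟨hε0, hεδ.trans_le (min_le_left _ _)⟩, hεS, ?_⟩
  have := (lt_div_iff₀ (by linarith)).1 (hεδ.trans_le (min_le_right _ _))
  nlinarith

section Moves

variable {a b : ℝ} {n : ℕ}

lemma intervalSup_rootPoly_update_eq_devE (ha : 0 ≤ a) (hb : 0 ≤ b) {ξ : Fin n → ℝ}
    (hξ : intervalSup a b (rootPoly ξ) = devE n a b) {i : Fin n} {s ε : ℝ} (hε : 0 ≤ ε)
    (hεQ : ε * intervalSup a b (∏ k ∈ Finset.univ.erase i, (X - C (ξ k))) ≤ devE n a b)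
    (hs : ∀ t ∈ Icc (0 : ℝ) 1, |t - s| ≤ max |t - ξ i| ε) :
    intervalSup a b (rootPoly (update ξ i s)) = devE n a b := by
  have hfactor := rootPoly_update ξ i (ξ i)
  rw [update_eq_self] at hfactor
  rw [hfactor] at hξ
  rw [rootPoly_update]
  exact intervalSup_mul_eq_devE ha hb (rootPoly_update ξ i s ▸ rootPoly_monic _)
    (rootPoly_update ξ i s ▸ natDegree_rootPoly _) hξ hε hεQ (by simpa using hs)

lemma intervalSup_rootPoly_update_update_eq_devE (ha : 0 ≤ a) (hb : 0 ≤ b) {ξ : Fin n → ℝ}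
    (hξ : intervalSup a b (rootPoly ξ) = devE n a b) {i j : Fin n} (hij : i ≠ j)
    (hξij : ξ i = ξ j) {ε : ℝ}
    (hεQ : ε * ε * intervalSup a b (∏ k ∈ (Finset.univ.erase j).erase i, (X - C (ξ k))) ≤
      devE n a b) :
    intervalSup a b (rootPoly (update (update ξ i (ξ i - ε)) j (ξ i + ε))) = devE n a b := by
  have hfactor := rootPoly_update_update ξ hij (ξ i) (ξ i)
  rw [update_eq_self, update_eq_self_iff.2 hξij] at hfactor
  rw [hfactor] at hξ
  rw [rootPoly_update_update ξ hij]
  refine intervalSup_mul_eq_devE ha hb (rootPoly_update_update ξ hij _ _ ▸ rootPoly_monic _)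
    (rootPoly_update_update ξ hij _ _ ▸ natDegree_rootPoly _) hξ (mul_self_nonneg ε) hεQ
    fun t _ => ?_
  simp only [eval_mul, eval_sub, eval_X, eval_C, abs_mul_self]
  rw [show (t - (ξ i - ε)) * (t - (ξ i + ε)) = (t - ξ i) * (t - ξ i) - ε * ε by ring]
  exact abs_sub_le_max_of_nonneg (mul_self_nonneg _) (mul_self_nonneg ε)

lemma exists_update_eq_devE_of_notMem_Ioo (ha : 0 ≤ a) (hb : 0 ≤ b) (hE : 0 < devE n a b)
    {ξ : Fin n → ℝ} (hξ : intervalSup a b (rootPoly ξ) = devE n a b) {i : Fin n}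
    (hi : ξ i ∉ Ioo (0 : ℝ) 1) :
    ∃ s ∈ Ioo (0 : ℝ) 1, s ∉ range ξ ∧ intervalSup a b (rootPoly (update ξ i s)) = devE n a b := by
  obtain ⟨ε, ⟨hε0, hε1⟩, hεS, hεQ⟩ := exists_mem_Ioo_notMem_mul_le one_pos hE
    (intervalSup_nonneg ha hb (∏ k ∈ Finset.univ.erase i, (X - C (ξ k))))
    ((finite_range ξ).union ((finite_range ξ).image (1 - ·)))
  have hupdate := fun s => intervalSup_rootPoly_update_eq_devE (s := s) ha hb hξ hε0.le hεQ
  rcases not_and_or.1 hi with h | h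
  · refine ⟨ε, ⟨hε0, hε1⟩, fun h' => hεS (Or.inl h'), hupdate _ fun t ht => ?_⟩
    refine (abs_sub_le_max_of_nonneg ht.1 hε0.le).trans (max_le_max ?_ le_rfl)
    exact (le_abs_self _).trans' (by linarith)
  · refine ⟨1 - ε, ⟨by linarith, by linarith⟩,
      fun ⟨k, hk⟩ => hεS (Or.inr ⟨ξ k, mem_range_self k, by simp [hk]⟩), hupdate _ fun t ht => ?_⟩
    rw [abs_sub_comm, show 1 - ε - t = 1 - t - ε by ring]
    refine (abs_sub_le_max_of_nonneg (sub_nonneg.2 ht.2) hε0.le).trans (max_le_max ?_ le_rfl)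
    exact (neg_le_abs _).trans' (by linarith)

lemma exists_update_update_eq_devE (ha : 0 ≤ a) (hb : 0 ≤ b) (hE : 0 < devE n a b)
    {ξ : Fin n → ℝ} (hξ : intervalSup a b (rootPoly ξ) = devE n a b) {i j : Fin n} (hij : i ≠ j)
    (hξij : ξ i = ξ j) (hi : ξ i ∈ Ioo (0 : ℝ) 1) :
    ∃ s ∈ Ioo (0 : ℝ) 1, s ∉ range ξ ∧ ∃ r ∈ Ioo (0 : ℝ) 1, r ∉ range (update ξ i s) ∧
      intervalSup a b (rootPoly (update (update ξ i s) j r)) = devE n a b := by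
  set M := intervalSup a b (∏ k ∈ (Finset.univ.erase j).erase i, (X - C (ξ k)))
  obtain ⟨ε, ⟨hε0, hεδ⟩, hεS, hεQ⟩ := exists_mem_Ioo_notMem_mul_le
    (lt_min hi.1 (sub_pos.2 hi.2)) hE (intervalSup_nonneg ha hb _ : 0 ≤ M)
    (((finite_range ξ).image (ξ i - ·)).union ((finite_range ξ).image (· - ξ i)))
  have hεc := hεδ.trans_le (min_le_left _ _)
  have hεc' := hεδ.trans_le (min_le_right _ _)
  refine ⟨ξ i - ε, ⟨by linarith, by linarith [hi.2]⟩,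
    fun ⟨k, hk⟩ => hεS (Or.inl ⟨ξ k, mem_range_self k, by linarith⟩),
    ξ i + ε, ⟨by linarith [hi.1], by linarith⟩, ?_,
    intervalSup_rootPoly_update_update_eq_devE ha hb hξ hij hξij ?_⟩
  · rintro ⟨k, hk⟩
    rcases eq_or_ne k i with rfl | hki
    · rw [update_self] at hk
      linarith
    · rw [update_of_ne hki] at hk
      exact hεS (Or.inr ⟨ξ k, mem_range_self k, by linarith⟩)
  · have hM : 0 ≤ M := intervalSup_nonneg ha hb _
    nlinarith [mul_le_mul_of_nonneg_right (by linarith [hi.2] : ε ≤ 1) (mul_nonneg hε0.le hM)]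

end Moves

open Classical in
noncomputable def simpleInteriorIndices {n : ℕ} (ξ : Fin n → ℝ) : Finset (Fin n) :=
  Finset.univ.filter fun i => ξ i ∈ Ioo (0 : ℝ) 1 ∧ ∀ j, j ≠ i → ξ j ≠ ξ i

section SimpleInteriorIndices

variable {n : ℕ} {ξ : Fin n → ℝ}

lemma mem_simpleInteriorIndices {i : Fin n} :
    i ∈ simpleInteriorIndices ξ ↔ ξ i ∈ Ioo (0 : ℝ) 1 ∧ ∀ j, j ≠ i → ξ j ≠ ξ i := by
  simp [simpleInteriorIndices]

lemma insert_subset_simpleInteriorIndices_update (i : Fin n) {s : ℝ} (hs : s ∈ Ioo (0 : ℝ) 1)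
    (hsξ : s ∉ range ξ) :
    insert i (simpleInteriorIndices ξ) ⊆ simpleInteriorIndices (update ξ i s) := by
  intro k hk
  rw [mem_simpleInteriorIndices]
  rcases eq_or_ne k i with rfl | hki
  · refine ⟨by rwa [update_self], fun j hj => ?_⟩
    rw [update_self, update_of_ne hj]
    exact fun h => hsξ ⟨j, h⟩
  · obtain ⟨hkI, hkd⟩ := mem_simpleInteriorIndices.1 ((Finset.mem_insert.1 hk).resolve_left hki)
    refine ⟨by rwa [update_of_ne hki], fun j hj => ?_⟩
    rw [update_of_ne hki]
    rcases eq_or_ne j i with rfl | hji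
    · rw [update_self]
      exact fun h => hsξ ⟨k, h.symm⟩
    · rw [update_of_ne hji]
      exact hkd j hj

lemma card_simpleInteriorIndices_lt_update {i : Fin n} (hi : i ∉ simpleInteriorIndices ξ)
    {s : ℝ} (hs : s ∈ Ioo (0 : ℝ) 1) (hsξ : s ∉ range ξ) :
    (simpleInteriorIndices ξ).card < (simpleInteriorIndices (update ξ i s)).card :=
  Finset.card_lt_card ((Finset.ssubset_insert hi).trans_subset
    (insert_subset_simpleInteriorIndices_update i hs hsξ))

lemma card_simpleInteriorIndices_le_update (i : Fin n) {s : ℝ} (hs : s ∈ Ioo (0 : ℝ) 1)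
    (hsξ : s ∉ range ξ) :
    (simpleInteriorIndices ξ).card ≤ (simpleInteriorIndices (update ξ i s)).card :=
  Finset.card_le_card ((Finset.subset_insert i _).trans
    (insert_subset_simpleInteriorIndices_update i hs hsξ))

lemma injective_of_simpleInteriorIndices_eq_univ (h : simpleInteriorIndices ξ = Finset.univ) :
    Injective ξ := fun i j hij => by_contra fun hne =>
  (mem_simpleInteriorIndices.1 (h ▸ Finset.mem_univ j)).2 i hne hij

lemma mem_Ioo_of_simpleInteriorIndices_eq_univ (h : simpleInteriorIndices ξ = Finset.univ)
    (i : Fin n) : ξ i ∈ Ioo (0 : ℝ) 1 :=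
  (mem_simpleInteriorIndices.1 (h ▸ Finset.mem_univ i)).1

end SimpleInteriorIndices

section Improvement

variable {a b : ℝ} {n : ℕ}

lemma exists_eq_devE_card_simpleInteriorIndices_lt (ha : 0 ≤ a) (hb : 0 ≤ b)
    (hE : 0 < devE n a b) {ξ : Fin n → ℝ} (hξ : intervalSup a b (rootPoly ξ) = devE n a b)
    {i : Fin n} (hi : i ∉ simpleInteriorIndices ξ) :
    ∃ η : Fin n → ℝ, intervalSup a b (rootPoly η) = devE n a b ∧
      (simpleInteriorIndices ξ).card < (simpleInteriorIndices η).card := by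
  by_cases hIoo : ξ i ∈ Ioo (0 : ℝ) 1
  · obtain ⟨j, hji, hj⟩ : ∃ j, j ≠ i ∧ ξ j = ξ i := by
      simpa [mem_simpleInteriorIndices, hIoo] using hi
    obtain ⟨s, hs, hsξ, r, hr, hrξ, hη⟩ :=
      exists_update_update_eq_devE ha hb hE hξ hji.symm hj.symm hIoo
    exact ⟨_, hη, (card_simpleInteriorIndices_lt_update hi hs hsξ).trans_le
      (card_simpleInteriorIndices_le_update j hr hrξ)⟩
  · obtain ⟨s, hs, hsξ, hη⟩ := exists_update_eq_devE_of_notMem_Ioo ha hb hE hξ hIoo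
    exact ⟨_, hη, card_simpleInteriorIndices_lt_update hi hs hsξ⟩

theorem exists_eq_devE_simpleInteriorIndices_eq_univ (ha : 0 ≤ a) (hb : 0 ≤ b)
    (hE : 0 < devE n a b) (ξ : Fin n → ℝ) (hξ : intervalSup a b (rootPoly ξ) = devE n a b) :
    ∃ η : Fin n → ℝ, intervalSup a b (rootPoly η) = devE n a b ∧
      simpleInteriorIndices η = Finset.univ := by
  by_cases h : simpleInteriorIndices ξ = Finset.univ
  · exact ⟨ξ, hξ, h⟩
  obtain ⟨i, hi⟩ := not_forall.1 (mt Finset.eq_univ_of_forall h)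
  obtain ⟨η, hη, hlt⟩ := exists_eq_devE_card_simpleInteriorIndices_lt ha hb hE hξ hi
  exact exists_eq_devE_simpleInteriorIndices_eq_univ ha hb hE η hη
termination_by n - (simpleInteriorIndices ξ).card
decreasing_by
  have := (simpleInteriorIndices η).card_le_univ
  rw [Fintype.card_fin] at this
  omega

end Improvement

theorem exists_extremal_with_simple_roots_general (a b : ℝ) (ha : 0 ≤ a) (hb : 0 ≤ b)
    (n : ℕ) :
    ∃ ξ : Fin n → ℝ, StrictMono ξ ∧ (∀ i, ξ i ∈ Set.Ioo (0 : ℝ) 1) ∧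
      intervalSup a b (∏ i, (Polynomial.X - Polynomial.C (ξ i))) = devE n a b := by
  obtain ⟨ξ, hξ⟩ := exists_intervalSup_rootPoly_eq_devE ha hb n
  have hE : 0 < devE n a b := hξ ▸ intervalSup_pos ha hb (rootPoly_monic ξ).ne_zero
  obtain ⟨η, hη, hsimple⟩ := exists_eq_devE_simpleInteriorIndices_eq_univ ha hb hE ξ hξ
  refine ⟨η ∘ Tuple.sort η, (Tuple.monotone_sort η).strictMono_of_injective
      ((injective_of_simpleInteriorIndices_eq_univ hsimple).comp (Tuple.sort η).injective),
    fun i => mem_Ioo_of_simpleInteriorIndices_eq_univ hsimple _, ?_⟩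
  rw [← hη, ← rootPoly_comp_equiv η (Tuple.sort η)]
  rfl

/-- for `α, β ≥ 0` and `n ≥ 1` there is an extremal monic polynomial of degree `n`
for `E_n(α,β)` whose roots `ξ₁ < ⋯ < ξₙ` are distinct and lie in `(0,1)`. -/
theorem exists_extremal_with_simple_roots (a b : ℝ) (ha : 0 ≤ a) (hb : 0 ≤ b)
    (n : ℕ) (hn : 1 ≤ n) :
    ∃ ξ : Fin n → ℝ, StrictMono ξ ∧ (∀ i, ξ i ∈ Set.Ioo (0 : ℝ) 1) ∧
      intervalSup a b (∏ i, (Polynomial.X - Polynomial.C (ξ i))) = devE n a b :=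
  exists_extremal_with_simple_roots_general a b ha hb n
end
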